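/- arXiv:1505.01472 — 5 statements merged into one kernel-verified Lean document; each statement's English description precedes it below -/
import Mathlib

section
/- For every fixed k ≥ 0, the function f(x) := log B(x, x+k) is convex on (0,∞). -/
noncomputable def Beta (x y : ℝ) : ℝ := Real.Gamma x * Real.Gamma y / Real.Gamma (x + y)

/-!
For each fixed `t ∈ (0, 1)` the integrand `t ^ (x - 1) * (1 - t) ^ (x + k - 1)` of
`B(x, x + k)` is log-affine in `x`. Hölder's inequality with exponents `1 / a` and `1 / b` shows
that integrating a pointwise log-convex family yields a log-convex function.
-/

open MeasureTheory Set Real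

section Holder

variable {α : Type*} [MeasurableSpace α] {μ : Measure α} {f g : α → ℝ} {a b : ℝ}

theorem memLp_rpow_of_integrable (hf0 : 0 ≤ᵐ[μ] f) (hf : Integrable f μ) (ha : 0 < a) :
    MemLp (fun t => f t ^ a) (ENNReal.ofReal (1 / a)) μ := by
  have h := (memLp_one_iff_integrable.mpr hf).norm_rpow_div (ENNReal.ofReal a)
  rw [ENNReal.toReal_ofReal ha.le, ← ENNReal.ofReal_one, ← ENNReal.ofReal_div_of_pos ha] at h
  refine h.ae_eq ?_
  filter_upwards [hf0] with t ht
  rw [Real.norm_of_nonneg ht]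

theorem integrable_rpow_mul_rpow (hf0 : 0 ≤ᵐ[μ] f) (hg0 : 0 ≤ᵐ[μ] g) (hf : Integrable f μ)
    (hg : Integrable g μ) (ha : 0 < a) (hb : 0 < b) (hab : a + b = 1) :
    Integrable (fun t => f t ^ a * g t ^ b) μ := by
  have := (holderConjugate_one_div ha hb hab).ennrealOfReal
  exact (memLp_rpow_of_integrable hf0 hf ha).integrable_mul (memLp_rpow_of_integrable hg0 hg hb)

theorem integral_rpow_mul_rpow_le (hf0 : 0 ≤ᵐ[μ] f) (hg0 : 0 ≤ᵐ[μ] g) (hf : Integrable f μ)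
    (hg : Integrable g μ) (ha : 0 < a) (hb : 0 < b) (hab : a + b = 1) :
    ∫ t, f t ^ a * g t ^ b ∂μ ≤ (∫ t, f t ∂μ) ^ a * (∫ t, g t ∂μ) ^ b := by
  have holder := integral_mul_le_Lp_mul_Lq_of_nonneg (holderConjugate_one_div ha hb hab)
    (hf0.mono fun t ht => rpow_nonneg ht a) (hg0.mono fun t ht => rpow_nonneg ht b)
    (memLp_rpow_of_integrable hf0 hf ha) (memLp_rpow_of_integrable hg0 hg hb)
  have rpow_one_div_cancel : ∀ {c : ℝ} {u : α → ℝ}, 0 < c → 0 ≤ᵐ[μ] u →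
      ∫ t, (u t ^ c) ^ (1 / c) ∂μ = ∫ t, u t ∂μ := fun hc hu0 => by
    refine integral_congr_ae ?_
    filter_upwards [hu0] with t ht
    rw [← rpow_mul ht, mul_one_div_cancel hc.ne', rpow_one]
  rwa [rpow_one_div_cancel ha hf0, rpow_one_div_cancel hb hg0, one_div_one_div,
    one_div_one_div] at holder

end Holder

theorem convexOn_log_integral {α E : Type*} [MeasurableSpace α] {μ : Measure α} [AddCommMonoid E]
    [Module ℝ E] {s : Set E} (hs : Convex ℝ s) {F : E → α → ℝ}
    (hF0 : ∀ x ∈ s, 0 ≤ᵐ[μ] F x) (hF : ∀ x ∈ s, Integrable (F x) μ)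
    (hF_pos : ∀ x ∈ s, 0 < ∫ t, F x t ∂μ)
    (hF_le : ∀ x ∈ s, ∀ y ∈ s, ∀ a b : ℝ, 0 < a → 0 < b → a + b = 1 →
      F (a • x + b • y) ≤ᵐ[μ] fun t => F x t ^ a * F y t ^ b) :
    ConvexOn ℝ s fun x => Real.log (∫ t, F x t ∂μ) := by
  refine convexOn_iff_forall_pos.mpr ⟨hs, fun x hx y hy a b ha hb hab => ?_⟩
  have hz := hs hx hy ha.le hb.le hab
  calc Real.log (∫ t, F (a • x + b • y) t ∂μ)
      ≤ Real.log ((∫ t, F x t ∂μ) ^ a * (∫ t, F y t ∂μ) ^ b) := by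
        refine log_le_log (hF_pos _ hz) ?_
        calc ∫ t, F (a • x + b • y) t ∂μ
            ≤ ∫ t, F x t ^ a * F y t ^ b ∂μ :=
              integral_mono_of_nonneg (hF0 _ hz) (integrable_rpow_mul_rpow (hF0 x hx) (hF0 y hy)
                (hF x hx) (hF y hy) ha hb hab) (hF_le x hx y hy a b ha hb hab)
          _ ≤ _ := integral_rpow_mul_rpow_le (hF0 x hx) (hF0 y hy) (hF x hx) (hF y hy) ha hb hab
    _ = a • Real.log (∫ t, F x t ∂μ) + b • Real.log (∫ t, F y t ∂μ) := by
        rw [log_mul (rpow_pos_of_pos (hF_pos x hx) a).ne' (rpow_pos_of_pos (hF_pos y hy) b).ne',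
          log_rpow (hF_pos x hx), log_rpow (hF_pos y hy), smul_eq_mul, smul_eq_mul]

theorem Beta_eq_integral {x y : ℝ} (hx : 0 < x) (hy : 0 < y) :
    Beta x y = ∫ t in Ioo (0 : ℝ) 1, t ^ (x - 1) * (1 - t) ^ (y - 1) := by
  have h_integrand : EqOn (fun t : ℝ => (t : ℂ) ^ ((x : ℂ) - 1) * (1 - (t : ℂ)) ^ ((y : ℂ) - 1))
      (fun t => ((t ^ (x - 1) * (1 - t) ^ (y - 1) : ℝ) : ℂ)) (Ioo 0 1) := fun t ht => by
    dsimp only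
    rw [Complex.ofReal_mul, Complex.ofReal_cpow ht.1.le,
      Complex.ofReal_cpow (sub_nonneg.mpr ht.2.le)]
    push_cast
    rfl
  rw [show Beta x y = ProbabilityTheory.beta x y from rfl,
    ProbabilityTheory.beta_eq_betaIntegralReal x y hx hy, Complex.betaIntegral,
    intervalIntegral.integral_of_le zero_le_one, integral_Ioc_eq_integral_Ioo,
    setIntegral_congr_fun measurableSet_Ioo h_integrand, integral_complex_ofReal, Complex.ofReal_re]

theorem rpow_sub_one_mul_one_sub_rpow_convex_comb {t x y k a b : ℝ} (ht : t ∈ Ioo (0 : ℝ) 1)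
    (hab : a + b = 1) :
    t ^ (a * x + b * y - 1) * (1 - t) ^ (a * x + b * y + k - 1) =
      (t ^ (x - 1) * (1 - t) ^ (x + k - 1)) ^ a * (t ^ (y - 1) * (1 - t) ^ (y + k - 1)) ^ b := by
  have ht0 := ht.1
  have ht1 : 0 < 1 - t := sub_pos.mpr ht.2
  rw [mul_rpow (rpow_nonneg ht0.le _) (rpow_nonneg ht1.le _),
    mul_rpow (rpow_nonneg ht0.le _) (rpow_nonneg ht1.le _), ← rpow_mul ht0.le, ← rpow_mul ht1.le,
    ← rpow_mul ht0.le, ← rpow_mul ht1.le, mul_mul_mul_comm, ← rpow_add ht0, ← rpow_add ht1]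
  congr 2
  · linear_combination hab
  · linear_combination (1 - k) * hab

theorem log_beta_diagonal_convex (k : ℝ) (hk : 0 ≤ k) :
    ConvexOn ℝ (Set.Ioi (0 : ℝ)) (fun x => Real.log (Beta x (x + k))) := by
  have hBeta : ∀ x ∈ Ioi (0 : ℝ),
      Beta x (x + k) = ∫ t in Ioo (0 : ℝ) 1, t ^ (x - 1) * (1 - t) ^ (x + k - 1) :=
    fun x hx => Beta_eq_integral hx (add_pos_of_pos_of_nonneg hx hk)
  have hBeta_pos : ∀ x ∈ Ioi (0 : ℝ), 0 < Beta x (x + k) := fun x hx =>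
    ProbabilityTheory.beta_pos hx (add_pos_of_pos_of_nonneg hx hk)
  refine ConvexOn.congr (convexOn_log_integral (convex_Ioi 0) ?_ ?_ ?_ ?_)
    fun x hx => by rw [hBeta x hx]
  · exact fun x _ => ae_restrict_of_forall_mem measurableSet_Ioo fun t ht =>
      mul_nonneg (rpow_nonneg ht.1.le _) (rpow_nonneg (sub_nonneg.mpr ht.2.le) _)
  · -- a non-integrable function would have integral `0`, not `Beta x (x + k) > 0`
    exact fun x hx => Integrable.of_integral_ne_zero (hBeta x hx ▸ (hBeta_pos x hx).ne')
  · exact fun x hx => hBeta x hx ▸ hBeta_pos x hx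
  · exact fun x _ y _ a b _ _ hab => ae_restrict_of_forall_mem measurableSet_Ioo fun t ht =>
      (rpow_sub_one_mul_one_sub_rpow_convex_comb ht hab).le
end

section
/- Let k ≥ 0 be fixed. If φ : (0,∞) → (0,∞) satisfies φ(x+1) = (x(x+k))/((2x+k+1)(2x+k)) φ(x) for all x > 0, φ(1) = B(1,1+k), and log∘φ is convex, then φ(x) = B(x, x+k) for all x > 0. -/
open Real Filter Set


noncomputable def psiB (k x : ℝ) : ℝ := Beta x (x + k)

noncomputable def Gf (k x : ℝ) : ℝ := Real.log (x * (x + k) / ((2 * x + k + 1) * (2 * x + k)))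

lemma psiB_pos {k : ℝ} (hk : 0 ≤ k) {x : ℝ} (hx : 0 < x) : 0 < psiB k x := by
  unfold psiB Beta
  have h1 : 0 < x + k := by linarith
  have h2 : 0 < x + (x + k) := by linarith
  exact div_pos (mul_pos (Real.Gamma_pos_of_pos hx) (Real.Gamma_pos_of_pos h1))
    (Real.Gamma_pos_of_pos h2)

lemma psiB_log {k : ℝ} (hk : 0 ≤ k) {x : ℝ} (hx : 0 < x) :
    Real.log (psiB k x) = Real.log (Real.Gamma x) + Real.log (Real.Gamma (x + k))
      - Real.log (Real.Gamma (2 * x + k)) := by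
  unfold psiB Beta
  have h1 : 0 < x + k := by linarith
  have h2 : 0 < x + (x + k) := by linarith
  rw [Real.log_div (mul_ne_zero (Real.Gamma_pos_of_pos hx).ne' (Real.Gamma_pos_of_pos h1).ne')
    (Real.Gamma_pos_of_pos h2).ne', Real.log_mul (Real.Gamma_pos_of_pos hx).ne'
    (Real.Gamma_pos_of_pos h1).ne', show x + (x + k) = 2 * x + k by ring]

lemma psiB_rec {k : ℝ} (hk : 0 ≤ k) {x : ℝ} (hx : 0 < x) :
    psiB k (x + 1) = (x * (x + k)) / ((2 * x + k + 1) * (2 * x + k)) * psiB k x := by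
  unfold psiB Beta
  have h1 : 0 < x + k := by linarith
  have h2 : 0 < 2 * x + k := by linarith
  have h3 : 0 < 2 * x + k + 1 := by linarith
  have e1 : Real.Gamma (x + 1) = x * Real.Gamma x := Real.Gamma_add_one hx.ne'
  have e2 : Real.Gamma (x + 1 + k) = (x + k) * Real.Gamma (x + k) := by
    rw [show x + 1 + k = (x + k) + 1 by ring, Real.Gamma_add_one h1.ne']
  have e3 : Real.Gamma (x + 1 + (x + 1 + k)) =
      (2 * x + k + 1) * ((2 * x + k) * Real.Gamma (2 * x + k)) := by
    rw [show x + 1 + (x + 1 + k) = (2 * x + k + 1) + 1 by ring, Real.Gamma_add_one h3.ne',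
      show 2 * x + k + 1 = (2 * x + k) + 1 by ring, Real.Gamma_add_one h2.ne']
  rw [e1, e2, e3, show x + (x + k) = 2 * x + k by ring]
  have hΓ : Real.Gamma (2 * x + k) ≠ 0 := (Real.Gamma_pos_of_pos h2).ne'
  field_simp

lemma Gf_expand {k : ℝ} (hk : 0 ≤ k) {x : ℝ} (hx : 0 < x) :
    Gf k x = Real.log x + Real.log (x + k)
      - Real.log (2 * x + k + 1) - Real.log (2 * x + k) := by
  unfold Gf
  have h1 : 0 < x + k := by linarith
  have h2 : 0 < 2 * x + k := by linarith
  have h3 : 0 < 2 * x + k + 1 := by linarith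
  rw [Real.log_div (by positivity) (by positivity), Real.log_mul hx.ne' h1.ne',
    Real.log_mul h3.ne' h2.ne']
  ring

lemma coef_pos {k : ℝ} (hk : 0 ≤ k) {x : ℝ} (hx : 0 < x) :
    0 < (x * (x + k)) / ((2 * x + k + 1) * (2 * x + k)) := by
  have h1 : 0 < x + k := by linarith
  have h2 : 0 < 2 * x + k := by linarith
  have h3 : 0 < 2 * x + k + 1 := by linarith
  positivity


lemma logdiff (u : ℕ → ℝ) (hu : Tendsto u atTop atTop) (c : ℝ) :
    Tendsto (fun m => Real.log (u m + c) - Real.log (u m)) atTop (nhds 0) := by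
  have h1 : Tendsto (fun m => (u m + c) / u m) atTop (nhds 1) := by
    have h2 : Tendsto (fun m => 1 + c * (u m)⁻¹) atTop (nhds (1 + c * 0)) :=
      tendsto_const_nhds.add ((tendsto_inv_atTop_zero.comp hu).const_mul c)
    rw [mul_zero, add_zero] at h2
    refine h2.congr' ?_
    filter_upwards [hu.eventually_gt_atTop 0] with m hm
    field_simp
  have h3 := (Real.continuousAt_log one_ne_zero).tendsto.comp h1
  rw [Real.log_one] at h3
  refine h3.congr' ?_
  filter_upwards [hu.eventually_gt_atTop (|c| + 1)] with m hm
  have hc : -|c| ≤ c := neg_abs_le c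
  have h4 : u m ≠ 0 := by intro h; rw [h] at hm; nlinarith [abs_nonneg c]
  have h5 : u m + c ≠ 0 := by nlinarith [abs_nonneg c]
  simp only [Function.comp_apply, Real.log_div h5 h4]

lemma ratio1 (s : ℝ) (hs0 : 0 < s) (hs1 : s ≤ 1) (u : ℕ → ℝ) (hu : Tendsto u atTop atTop) :
    Tendsto (fun m => Real.log (Real.Gamma (u m + s)) - Real.log (Real.Gamma (u m))
      - s * Real.log (u m)) atTop (nhds 0) := by
  have hlow : Tendsto (fun m => s * (Real.log (u m + (-1)) - Real.log (u m))) atTop (nhds 0) := by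
    have := (logdiff u hu (-1)).const_mul s
    simpa using this
  refine tendsto_of_tendsto_of_tendsto_of_le_of_le' hlow tendsto_const_nhds ?_ ?_
  · filter_upwards [hu.eventually_gt_atTop 2] with m hm
    set t := u m with ht
    have ht0 : (0:ℝ) < t := by linarith
    have ht1 : (0:ℝ) < t - 1 := by linarith
    have hc := Real.convexOn_log_Gamma
    have hsec := hc.secant_mono (a := t) (x := t - 1) (y := t + s)
      (mem_Ioi.mpr ht0) (mem_Ioi.mpr ht1) (mem_Ioi.mpr (by linarith)) (by intro h; linarith)
      (by intro h; linarith) (by linarith)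
    have hΓ : Real.Gamma t = (t - 1) * Real.Gamma (t - 1) := by
      rw [show t = (t - 1) + 1 by ring, Real.Gamma_add_one (by linarith)]
      ring_nf
    have hlg : Real.log (Real.Gamma t) = Real.log (t - 1) + Real.log (Real.Gamma (t - 1)) := by
      rw [hΓ, Real.log_mul (by linarith) (Real.Gamma_pos_of_pos ht1).ne']
    simp only [Function.comp_apply] at hsec
    rw [show t - 1 - t = -1 by ring, show t + s - t = s by ring, div_neg, div_one] at hsec
    have h6 : s * Real.log (t - 1) ≤ Real.log (Real.Gamma (t + s)) - Real.log (Real.Gamma t) := by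
      rw [le_div_iff₀ hs0] at hsec
      nlinarith [hsec, hlg]
    have : t + (-1) = t - 1 := by ring
    rw [this]
    nlinarith [h6]
  · filter_upwards [hu.eventually_gt_atTop 2] with m hm
    set t := u m with ht
    have ht0 : (0:ℝ) < t := by linarith
    have hc := Real.convexOn_log_Gamma
    have hsec := hc.secant_mono (a := t) (x := t + s) (y := t + 1)
      (mem_Ioi.mpr ht0) (mem_Ioi.mpr (by linarith)) (mem_Ioi.mpr (by linarith))
      (by intro h; linarith) (by intro h; linarith) (by linarith)
    have hlg : Real.log (Real.Gamma (t + 1)) = Real.log t + Real.log (Real.Gamma t) := by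
      rw [Real.Gamma_add_one ht0.ne', Real.log_mul ht0.ne' (Real.Gamma_pos_of_pos ht0).ne']
    simp only [Function.comp_apply] at hsec
    rw [show t + s - t = s by ring, show t + 1 - t = 1 by ring, div_one] at hsec
    rw [div_le_iff₀ hs0] at hsec
    nlinarith [hsec, hlg]

lemma ratio (s : ℝ) (hs0 : 0 < s) (hs2 : s ≤ 2) (u : ℕ → ℝ) (hu : Tendsto u atTop atTop) :
    Tendsto (fun m => Real.log (Real.Gamma (u m + s)) - Real.log (Real.Gamma (u m))
      - s * Real.log (u m)) atTop (nhds 0) := by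
  rcases le_or_gt s 1 with h | h
  · exact ratio1 s hs0 h u hu
  · have h1 := ratio1 (s - 1) (by linarith) (by linarith) u hu
    have h2 := logdiff u hu (s - 1)
    have h3 := h1.add h2
    rw [add_zero] at h3
    refine h3.congr' ?_
    filter_upwards [hu.eventually_gt_atTop 1] with m hm
    have ht0 : (0:ℝ) < u m + (s - 1) := by linarith
    have ht : u m + (s - 1) ≠ 0 := ht0.ne'
    have hG : Real.Gamma (u m + s) = (u m + (s - 1)) * Real.Gamma (u m + (s - 1)) := by
      rw [show u m + s = (u m + (s - 1)) + 1 by ring, Real.Gamma_add_one ht]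
    rw [hG, Real.log_mul ht (Real.Gamma_pos_of_pos ht0).ne']
    ring

lemma tend_n1 : Filter.Tendsto (fun m : ℕ => (m:ℝ) + 1) Filter.atTop Filter.atTop :=
  tendsto_atTop_add_const_right _ 1 tendsto_natCast_atTop_atTop

lemma tend_n2 : Filter.Tendsto (fun m : ℕ => (m:ℝ) + 2) Filter.atTop Filter.atTop :=
  tendsto_atTop_add_const_right _ 2 tendsto_natCast_atTop_atTop

lemma Gdiff {k : ℝ} (hk : 0 ≤ k) (y : ℝ) :
    Tendsto (fun m : ℕ => y * (Gf k ((m:ℝ) + 1) - Gf k ((m:ℝ) + 2))) atTop (nhds 0) := by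
  have hu2 : Tendsto (fun m : ℕ => (m:ℝ) + 1 + k) atTop atTop :=
    tendsto_atTop_add_const_right _ k tend_n1
  have hu3 : Tendsto (fun m : ℕ => 2 * ((m:ℝ) + 1) + k) atTop atTop :=
    tendsto_atTop_add_const_right _ k (tend_n1.const_mul_atTop two_pos)
  have hu4 : Tendsto (fun m : ℕ => 2 * ((m:ℝ) + 1) + k + 1) atTop atTop :=
    tendsto_atTop_add_const_right _ 1 hu3
  have l1 := logdiff _ tend_n1 1
  have l2 := logdiff _ hu2 1
  have l3 := logdiff _ hu3 2
  have l4 := logdiff _ hu4 2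
  have combo := ((((l3.add l4).sub l1).sub l2).const_mul y)
  rw [show (0:ℝ) + 0 - 0 - 0 = 0 by norm_num, mul_zero] at combo
  refine combo.congr' ?_
  filter_upwards [] with m
  have p1 : (0:ℝ) < (m:ℝ) + 1 := by positivity
  have p2 : (0:ℝ) < (m:ℝ) + 2 := by positivity
  rw [Gf_expand hk p1, Gf_expand hk p2]
  ring_nf

lemma star {k : ℝ} (hk : 0 ≤ k) {x : ℝ} (hx : 0 < x) (hx1 : x ≤ 1) :
    Tendsto (fun m : ℕ => Real.log (psiB k (x + ((m:ℝ) + 2))) - Real.log (psiB k ((m:ℝ) + 2))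
      - x * Gf k ((m:ℝ) + 2)) atTop (nhds 0) := by
  have hu2 : Tendsto (fun m : ℕ => (m:ℝ) + 2 + k) atTop atTop :=
    tendsto_atTop_add_const_right _ k tend_n2
  have hu3 : Tendsto (fun m : ℕ => 2 * ((m:ℝ) + 2) + k) atTop atTop :=
    tendsto_atTop_add_const_right _ k (tend_n2.const_mul_atTop two_pos)
  have A := ratio x hx (by linarith) _ tend_n2
  have B := ratio x hx (by linarith) _ hu2
  have C := ratio (2 * x) (by linarith) (by linarith) _ hu3
  have D := (logdiff _ hu3 1).const_mul x
  have combo := ((A.add B).sub C).add D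
  rw [show (0:ℝ) + 0 - 0 + x * 0 = 0 by ring] at combo
  refine combo.congr' ?_
  filter_upwards [] with m
  have p1 : (0:ℝ) < (m:ℝ) + 2 := by positivity
  have p2 : (0:ℝ) < x + ((m:ℝ) + 2) := by positivity
  rw [psiB_log hk p2, psiB_log hk p1, Gf_expand hk p1]
  ring_nf

theorem beta_characterization (k : ℝ) (hk : 0 ≤ k) (φ : ℝ → ℝ)
    (hpos : ∀ x, 0 < x → 0 < φ x)
    (heq : ∀ x, 0 < x →
      φ (x + 1) = (x * (x + k)) / ((2 * x + k + 1) * (2 * x + k)) * φ x)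
    (hinit : φ 1 = Beta 1 (1 + k))
    (hconv : ConvexOn ℝ (Set.Ioi (0 : ℝ)) (Real.log ∘ φ)) :
    ∀ x, 0 < x → φ x = Beta x (x + k) := by
  have logrecφ : ∀ y, 0 < y → Real.log (φ (y + 1)) = Gf k y + Real.log (φ y) := by
    intro y hy
    rw [heq y hy, Real.log_mul (coef_pos hk hy).ne' (hpos y hy).ne']
    rfl
  have logrecψ : ∀ y, 0 < y → Real.log (psiB k (y + 1)) = Gf k y + Real.log (psiB k y) := by
    intro y hy
    rw [psiB_rec hk hy, Real.log_mul (coef_pos hk hy).ne' (psiB_pos hk hy).ne']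
    rfl
  have hper : ∀ n : ℕ, ∀ y, 0 < y →
      Real.log (φ (y + n)) - Real.log (psiB k (y + n))
        = Real.log (φ y) - Real.log (psiB k y) := by
    intro n
    induction n with
    | zero => intro y hy; norm_num
    | succ n ih =>
      intro y hy
      have hy' : 0 < y + (n:ℝ) := by positivity
      have e : y + ((n + 1 : ℕ) : ℝ) = (y + (n:ℝ)) + 1 := by push_cast; ring
      rw [e, logrecφ _ hy', logrecψ _ hy']
      have := ih y hy
      linarith
  have hinit' : Real.log (φ 1) = Real.log (psiB k 1) := by
    rw [hinit]; rfl
  have hgm : ∀ m : ℕ, Real.log (φ ((m:ℝ) + 2)) = Real.log (psiB k ((m:ℝ) + 2)) := by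
    intro m
    have h1 := hper (m + 1) 1 one_pos
    have e : (1:ℝ) + ((m + 1 : ℕ) : ℝ) = (m:ℝ) + 2 := by push_cast; ring
    rw [e, hinit'] at h1
    linarith
  have key : ∀ y, 0 < y → y ≤ 1 → φ y = psiB k y := by
    intro y hy hy1
    have hbounds : ∀ m : ℕ,
        (y * (Gf k ((m:ℝ) + 1) - Gf k ((m:ℝ) + 2))
          - (Real.log (psiB k (y + ((m:ℝ) + 2))) - Real.log (psiB k ((m:ℝ) + 2))
            - y * Gf k ((m:ℝ) + 2))
          ≤ Real.log (φ y) - Real.log (psiB k y)) ∧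
        (Real.log (φ y) - Real.log (psiB k y)
          ≤ -(Real.log (psiB k (y + ((m:ℝ) + 2))) - Real.log (psiB k ((m:ℝ) + 2))
            - y * Gf k ((m:ℝ) + 2))) := by
      intro m
      have p2 : (0:ℝ) < (m:ℝ) + 2 := by positivity
      have p1 : (0:ℝ) < (m:ℝ) + 1 := by positivity
      have hper2 := hper (m + 2) y hy
      have e : y + ((m + 2 : ℕ) : ℝ) = y + ((m:ℝ) + 2) := by push_cast; ring
      rw [e] at hper2
      have hg := hgm m
      have hsecU := hconv.secant_mono (a := (m:ℝ) + 2) (x := y + ((m:ℝ) + 2))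
        (y := ((m:ℝ) + 2) + 1) (mem_Ioi.mpr p2) (mem_Ioi.mpr (by positivity))
        (mem_Ioi.mpr (by positivity)) (by intro h; nlinarith [hy]) (by intro h; linarith)
        (by linarith)
      simp only [Function.comp_apply] at hsecU
      rw [show y + ((m:ℝ) + 2) - ((m:ℝ) + 2) = y by ring,
        show ((m:ℝ) + 2) + 1 - ((m:ℝ) + 2) = 1 by ring, div_one, logrecφ _ p2] at hsecU
      rw [div_le_iff₀ hy] at hsecU
      have hsecL := hconv.secant_mono (a := (m:ℝ) + 2) (x := (m:ℝ) + 1)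
        (y := y + ((m:ℝ) + 2)) (mem_Ioi.mpr p2) (mem_Ioi.mpr p1)
        (mem_Ioi.mpr (by positivity)) (by intro h; linarith) (by intro h; nlinarith [hy])
        (by linarith)
      simp only [Function.comp_apply] at hsecL
      have hstep : Real.log (φ ((m:ℝ) + 2)) = Gf k ((m:ℝ) + 1) + Real.log (φ ((m:ℝ) + 1)) := by
        have h5 := logrecφ _ p1
        rw [show ((m:ℝ) + 1) + 1 = (m:ℝ) + 2 by ring] at h5
        exact h5
      rw [show ((m:ℝ) + 1) - ((m:ℝ) + 2) = -1 by ring,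
        show y + ((m:ℝ) + 2) - ((m:ℝ) + 2) = y by ring, div_neg, div_one] at hsecL
      rw [le_div_iff₀ hy] at hsecL
      constructor
      · nlinarith [hsecL, hstep, hper2, hg]
      · nlinarith [hsecU, hper2, hg]
    have hεlim := star hk hy hy1
    have hneg : Tendsto (fun m : ℕ => -(Real.log (psiB k (y + ((m:ℝ) + 2)))
        - Real.log (psiB k ((m:ℝ) + 2)) - y * Gf k ((m:ℝ) + 2))) atTop (nhds 0) := by
      simpa using hεlim.neg
    have hlow : Tendsto (fun m : ℕ => y * (Gf k ((m:ℝ) + 1) - Gf k ((m:ℝ) + 2))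
        - (Real.log (psiB k (y + ((m:ℝ) + 2))) - Real.log (psiB k ((m:ℝ) + 2))
          - y * Gf k ((m:ℝ) + 2))) atTop (nhds 0) := by
      simpa using (Gdiff hk y).sub hεlim
    have h1 : Real.log (φ y) - Real.log (psiB k y) ≤ 0 :=
      ge_of_tendsto hneg (Filter.Eventually.of_forall fun m => (hbounds m).2)
    have h2 : 0 ≤ Real.log (φ y) - Real.log (psiB k y) :=
      le_of_tendsto hlow (Filter.Eventually.of_forall fun m => (hbounds m).1)
    have hlog : Real.log (φ y) = Real.log (psiB k y) := by linarith
    rw [← Real.exp_log (hpos y hy), hlog, Real.exp_log (psiB_pos hk hy)]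
  have main : ∀ n : ℕ, ∀ x, 0 < x → x ≤ (n:ℝ) + 1 → φ x = psiB k x := by
    intro n
    induction n with
    | zero =>
      intro x hx hx1
      exact key x hx (by norm_num at hx1; exact hx1)
    | succ n ih =>
      intro x hx hx1
      by_cases hc : x ≤ (n:ℝ) + 1
      · exact ih x hx hc
      · push_neg at hc
        have hx' : 0 < x - 1 := by
          have : (0:ℝ) ≤ (n:ℝ) := Nat.cast_nonneg n
          linarith
        have hx'' : x - 1 ≤ (n:ℝ) + 1 := by push_cast at hx1 ⊢; linarith
        have h1 := ih (x - 1) hx' hx''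
        have h2 := heq (x - 1) hx'
        have h3 := psiB_rec hk hx'
        rw [show x - 1 + 1 = x by ring] at h2 h3
        rw [h2, h3, h1]
  intro x hx
  obtain ⟨n, hn⟩ := exists_nat_ge x
  exact main n x hx (by linarith)
end

section
/- Krull's theorem: Let a ≥ −∞ and let F : (a,∞) → ℝ be convex or concave with lim_{x→∞}[F(x+1) − F(x)] = 0. Then for every (x₀, y₀) ∈ (a,∞) × ℝ there exists exactly one convex-or-concave function φ : (a,∞) → ℝ satisfying φ(x+1) = φ(x) + F(x) for all x > a and φ(x₀) = y₀. -/
open Filter Finset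

private lemma slope_mono2 {s : Set ℝ} {f : ℝ → ℝ} (hf : ConvexOn ℝ s f)
    {p q u v : ℝ} (hp : p ∈ s) (hq : q ∈ s) (hu : u ∈ s) (hv : v ∈ s)
    (hpq : p < q) (huv : u < v) (hpu : p ≤ u) (hqv : q ≤ v) :
    (f q - f p) / (q - p) ≤ (f v - f u) / (v - u) := by
  have hpv : p < v := hpu.trans_lt huv
  have h1 : (f q - f p) / (q - p) ≤ (f v - f p) / (v - p) :=
    hf.secant_mono hp hq hv hpq.ne' hpv.ne' hqv
  have h2 : (f p - f v) / (p - v) ≤ (f u - f v) / (u - v) :=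
    hf.secant_mono hv hp hu hpv.ne huv.ne hpu
  have e1 : (f p - f v) / (p - v) = (f v - f p) / (v - p) := by
    rw [← neg_sub (f v) (f p), ← neg_sub v p, neg_div_neg_eq]
  have e2 : (f u - f v) / (u - v) = (f v - f u) / (v - u) := by
    rw [← neg_sub (f v) (f u), ← neg_sub v u, neg_div_neg_eq]
  rw [e1, e2] at h2
  linarith

private lemma slope_anti2 {s : Set ℝ} {f : ℝ → ℝ} (hf : ConcaveOn ℝ s f)
    {p q u v : ℝ} (hp : p ∈ s) (hq : q ∈ s) (hu : u ∈ s) (hv : v ∈ s)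
    (hpq : p < q) (huv : u < v) (hpu : p ≤ u) (hqv : q ≤ v) :
    (f v - f u) / (v - u) ≤ (f q - f p) / (q - p) := by
  have h := slope_mono2 hf.neg hp hq hu hv hpq huv hpu hqv
  simp only [Pi.neg_apply] at h
  have e : ∀ b c d : ℝ, (-b - -c) / d = -((b - c) / d) := by intros; ring
  rw [e, e] at h
  linarith

/-- unit-interval increments are antitone for a concave function -/
private lemma unit_anti {s : Set ℝ} {f : ℝ → ℝ} (hf : ConcaveOn ℝ s f)
    {p q : ℝ} (hp : p ∈ s) (hp1 : p + 1 ∈ s) (hq : q ∈ s) (hq1 : q + 1 ∈ s)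
    (hpq : p ≤ q) :
    f (q + 1) - f q ≤ f (p + 1) - f p := by
  have h := slope_anti2 hf hp hp1 hq hq1 (by linarith) (by linarith) hpq (by linarith)
  rw [show q + 1 - q = (1:ℝ) by ring, show p + 1 - p = (1:ℝ) by ring, div_one, div_one] at h
  exact h

private lemma bracket_concave {s : Set ℝ} (hup : ∀ ⦃y z : ℝ⦄, y ∈ s → y ≤ z → z ∈ s)
    {f : ℝ → ℝ} (hf : ConcaveOn ℝ s f) {x₀ x m n : ℝ}
    (hx₀ : x₀ ∈ s) (hx : x ∈ s) (hm : 1 ≤ m) (ht : |x - x₀| ≤ m) (hn : m ≤ n) :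
    |f (x + n) - f (x₀ + n) - (x - x₀) * (f (x₀ + n + 1) - f (x₀ + n))| ≤
      |x - x₀| * ((f (x₀ + (n - m) + 1) - f (x₀ + (n - m))) -
        (f (x₀ + (n + m) + 1) - f (x₀ + (n + m)))) := by
  have htm : -m ≤ x - x₀ ∧ x - x₀ ≤ m := abs_le.mp ht
  -- memberships
  have h1 : x₀ + (n - m) ∈ s := hup hx₀ (by linarith)
  have h2 : x₀ + (n - m) + 1 ∈ s := hup hx₀ (by linarith)
  have h3 : x₀ + n ∈ s := hup hx₀ (by linarith)
  have h4 : x₀ + n + 1 ∈ s := hup hx₀ (by linarith)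
  have h5 : x₀ + (n + m) ∈ s := hup hx₀ (by linarith)
  have h6 : x₀ + (n + m) + 1 ∈ s := hup hx₀ (by linarith)
  have h7 : x + n ∈ s := hup hx (by linarith)
  set dl := f (x₀ + (n - m) + 1) - f (x₀ + (n - m)) with hdl
  set dm := f (x₀ + n + 1) - f (x₀ + n) with hdm
  set dr := f (x₀ + (n + m) + 1) - f (x₀ + (n + m)) with hdr
  -- middle increment between outer increments
  have hml : dm ≤ dl := unit_anti hf h1 h2 h3 h4 (by linarith)
  have hmr : dr ≤ dm := unit_anti hf h3 h4 h5 h6 (by linarith)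
  rcases lt_trichotomy (x - x₀) 0 with hts | hts | hts
  · -- x < x₀ : points x + n < x₀ + n
    have hxx : x + n < x₀ + n := by linarith
    -- upper bound for slope of chord [x+n, x₀+n]
    have hA : (f (x₀ + n) - f (x + n)) / (x₀ + n - (x + n)) ≤ dl / 1 := by
      have := slope_anti2 hf h1 h2 h7 h3 (by linarith) hxx (by linarith) (by linarith)
      rw [show x₀ + (n - m) + 1 - (x₀ + (n - m)) = (1:ℝ) by ring] at this
      exact this
    have hB : dr / 1 ≤ (f (x₀ + n) - f (x + n)) / (x₀ + n - (x + n)) := by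
      have := slope_anti2 hf h7 h3 h5 h6 hxx (by linarith) (by linarith) (by linarith)
      rw [show x₀ + (n + m) + 1 - (x₀ + (n + m)) = (1:ℝ) by ring] at this
      exact this
    rw [div_one] at hA hB
    set t := x - x₀ with htdef
    set A := f (x + n) - f (x₀ + n) with hA2
    have hden : x₀ + n - (x + n) = -t := by rw [htdef]; ring
    rw [hden] at hA hB
    have htne : t ≠ 0 := ne_of_lt hts
    have hAeq : f (x₀ + n) - f (x + n) = -A := by rw [hA2]; ring
    rw [hAeq] at hA hB
    have hdivA : -A / -t = A / t := by rw [neg_div_neg_eq]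
    rw [hdivA] at hA hB
    -- now dr ≤ A/t ≤ dl and dr ≤ dm ≤ dl
    have key : |A / t - dm| ≤ dl - dr := abs_le.mpr ⟨by linarith, by linarith⟩
    have : |A - t * dm| = |t| * |A / t - dm| := by
      rw [← abs_mul]
      congr 1
      field_simp
    rw [this]
    exact mul_le_mul_of_nonneg_left key (abs_nonneg t)
  · -- x = x₀
    have hxe : x = x₀ := by linarith
    subst hxe
    simp
  · -- x₀ < x
    have hxx : x₀ + n < x + n := by linarith
    have hA : (f (x + n) - f (x₀ + n)) / (x + n - (x₀ + n)) ≤ dl / 1 := by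
      have := slope_anti2 hf h1 h2 h3 h7 (by linarith) hxx (by linarith) (by linarith)
      rw [show x₀ + (n - m) + 1 - (x₀ + (n - m)) = (1:ℝ) by ring] at this
      exact this
    have hB : dr / 1 ≤ (f (x + n) - f (x₀ + n)) / (x + n - (x₀ + n)) := by
      have := slope_anti2 hf h3 h7 h5 h6 hxx (by linarith) (by linarith) (by linarith)
      rw [show x₀ + (n + m) + 1 - (x₀ + (n + m)) = (1:ℝ) by ring] at this
      exact this
    rw [div_one] at hA hB
    set t := x - x₀ with htdef
    set A := f (x + n) - f (x₀ + n) with hA2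
    have hden : x + n - (x₀ + n) = t := by rw [htdef]; ring
    rw [hden] at hA hB
    have htne : t ≠ 0 := ne_of_gt hts
    have key : |A / t - dm| ≤ dl - dr := abs_le.mpr ⟨by linarith, by linarith⟩
    have : |A - t * dm| = |t| * |A / t - dm| := by
      rw [← abs_mul]
      congr 1
      field_simp
    rw [this]
    exact mul_le_mul_of_nonneg_left key (abs_nonneg t)

private lemma bracket {s : Set ℝ} (hup : ∀ ⦃y z : ℝ⦄, y ∈ s → y ≤ z → z ∈ s)
    {f : ℝ → ℝ} (hf : ConvexOn ℝ s f ∨ ConcaveOn ℝ s f) {x₀ x m n : ℝ}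
    (hx₀ : x₀ ∈ s) (hx : x ∈ s) (hm : 1 ≤ m) (ht : |x - x₀| ≤ m) (hn : m ≤ n) :
    |f (x + n) - f (x₀ + n) - (x - x₀) * (f (x₀ + n + 1) - f (x₀ + n))| ≤
      |x - x₀| * |(f (x₀ + (n - m) + 1) - f (x₀ + (n - m))) -
        (f (x₀ + (n + m) + 1) - f (x₀ + (n + m)))| := by
  rcases hf with hf | hf
  · have h := bracket_concave hup hf.neg hx₀ hx hm ht hn
    simp only [Pi.neg_apply] at h
    calc |f (x + n) - f (x₀ + n) - (x - x₀) * (f (x₀ + n + 1) - f (x₀ + n))|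
        = |(-f (x + n)) - (-f (x₀ + n)) - (x - x₀) * ((-f (x₀ + n + 1)) - (-f (x₀ + n)))| := by
          rw [← abs_neg]; congr 1; ring
      _ ≤ |x - x₀| * (((-f (x₀ + (n - m) + 1)) - (-f (x₀ + (n - m)))) -
            ((-f (x₀ + (n + m) + 1)) - (-f (x₀ + (n + m))))) := h
      _ ≤ |x - x₀| * |(f (x₀ + (n - m) + 1) - f (x₀ + (n - m))) -
            (f (x₀ + (n + m) + 1) - f (x₀ + (n + m)))| := by
          apply mul_le_mul_of_nonneg_left _ (abs_nonneg _)
          rw [← abs_neg]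
          calc ((-f (x₀ + (n - m) + 1)) - (-f (x₀ + (n - m)))) -
              ((-f (x₀ + (n + m) + 1)) - (-f (x₀ + (n + m)))) ≤
              |((-f (x₀ + (n - m) + 1)) - (-f (x₀ + (n - m)))) -
              ((-f (x₀ + (n + m) + 1)) - (-f (x₀ + (n + m))))| := le_abs_self _
            _ = |-((f (x₀ + (n - m) + 1) - f (x₀ + (n - m))) -
              (f (x₀ + (n + m) + 1) - f (x₀ + (n + m))))| := by congr 1; ring
  · calc |f (x + n) - f (x₀ + n) - (x - x₀) * (f (x₀ + n + 1) - f (x₀ + n))|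
        ≤ |x - x₀| * ((f (x₀ + (n - m) + 1) - f (x₀ + (n - m))) -
            (f (x₀ + (n + m) + 1) - f (x₀ + (n + m)))) := bracket_concave hup hf hx₀ hx hm ht hn
      _ ≤ _ := mul_le_mul_of_nonneg_left (le_abs_self _) (abs_nonneg _)

private lemma krull_exists {a : EReal} {F : ℝ → ℝ}
    (hF : ConcaveOn ℝ {x : ℝ | a < (x : EReal)} F)
    (hlim : Filter.Tendsto (fun x => F (x + 1) - F x) Filter.atTop (nhds 0))
    (x₀ : ℝ) (hx₀ : a < (x₀ : EReal)) (y₀ : ℝ) :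
    ∃ φ : ℝ → ℝ, ConvexOn ℝ {x : ℝ | a < (x : EReal)} φ ∧
      (∀ x : ℝ, a < (x : EReal) → φ (x + 1) = φ x + F x) ∧ φ x₀ = y₀ := by
  set S : Set ℝ := {x : ℝ | a < (x : EReal)} with hS
  have hup : ∀ ⦃y z : ℝ⦄, y ∈ S → y ≤ z → z ∈ S := fun y z hy hyz =>
    lt_of_lt_of_le hy (EReal.coe_le_coe_iff.mpr hyz)
  have hSconv : Convex ℝ S := by
    rw [convex_iff_ordConnected]
    exact ⟨fun x hx y hy z hz => hup hx hz.1⟩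
  have hx₀S : x₀ ∈ S := hx₀
  -- the increment sequence
  set D : ℕ → ℝ := fun k => F (x₀ + k + 1) - F (x₀ + k) with hD
  have hnat : Tendsto (fun k : ℕ => x₀ + (k : ℝ)) atTop atTop :=
    tendsto_atTop_add_const_left atTop x₀ tendsto_natCast_atTop_atTop
  have hDtend : Tendsto D atTop (nhds 0) := hlim.comp hnat
  have hDanti : ∀ j k : ℕ, j ≤ k → D k ≤ D j := by
    intro j k hjk
    have hj0 : (0:ℝ) ≤ (j:ℝ) := Nat.cast_nonneg j
    have hk0 : (0:ℝ) ≤ (k:ℝ) := Nat.cast_nonneg k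
    exact unit_anti hF (hup hx₀S (by linarith)) (hup hx₀S (by linarith))
      (hup hx₀S (by linarith)) (hup hx₀S (by linarith))
      (by have : (j:ℝ) ≤ k := Nat.cast_le.mpr hjk; linarith)
  have hDnonneg : ∀ k, 0 ≤ D k := by
    intro k
    refine le_of_tendsto hDtend ?_
    exact eventually_atTop.mpr ⟨k, fun j hj => hDanti k j hj⟩
  -- summability of shifted differences
  have hDsum : ∀ c : ℕ, Summable (fun n : ℕ => D n - D (n + c)) := by
    intro c
    apply summable_of_sum_range_le (c := ∑ k ∈ Finset.range c, D k)
    · intro n; have := hDanti n (n + c) (Nat.le_add_right n c); linarith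
    · intro N
      rw [Finset.sum_sub_distrib]
      have e1 : ∑ n ∈ Finset.range N, D (n + c) = ∑ n ∈ Finset.range (c + N), D n
          - ∑ n ∈ Finset.range c, D n := by
        rw [Finset.sum_range_add]
        simp [add_comm]
      rw [e1]
      have e2 : ∑ n ∈ Finset.range N, D n ≤ ∑ n ∈ Finset.range (c + N), D n :=
        Finset.sum_le_sum_of_subset_of_nonneg
          (Finset.range_subset_range.mpr (Nat.le_add_left N c)) (fun i _ _ => hDnonneg i)
      linarith
  -- the summand
  set g : ℕ → ℝ → ℝ := fun n x => F (x + n) - F (x₀ + n) - (x - x₀) * D n with hg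
  set mm : ℝ → ℕ := fun x => ⌈|x - x₀|⌉₊ + 1 with hmm
  have hgbound : ∀ x ∈ S, ∀ n : ℕ,
      |g (n + mm x) x| ≤ |x - x₀| * (D n - D (n + 2 * mm x)) := by
    intro x hx n
    have hm1 : (1:ℝ) ≤ (mm x : ℝ) := by
      simp only [hmm]; push_cast; linarith [Nat.cast_nonneg (α := ℝ) ⌈|x - x₀|⌉₊]
    have htm : |x - x₀| ≤ (mm x : ℝ) := by
      simp only [hmm]; push_cast; linarith [Nat.le_ceil |x - x₀|]
    have hb := bracket hup (Or.inr hF) hx₀S hx hm1 htm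
      (show (mm x : ℝ) ≤ ((n + mm x : ℕ) : ℝ) by push_cast; linarith [Nat.cast_nonneg (α := ℝ) n])
    have e1 : ((n + mm x : ℕ) : ℝ) - (mm x : ℝ) = (n : ℝ) := by push_cast; ring
    have e2 : ((n + mm x : ℕ) : ℝ) + (mm x : ℝ) = ((n + 2 * mm x : ℕ) : ℝ) := by push_cast; ring
    rw [e1, e2] at hb
    calc |g (n + mm x) x| ≤ |x - x₀| * |(F (x₀ + n + 1) - F (x₀ + n)) -
          (F (x₀ + (n + 2 * mm x : ℕ) + 1) - F (x₀ + (n + 2 * mm x : ℕ)))| := hb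
      _ = |x - x₀| * (D n - D (n + 2 * mm x)) := by
          congr 1
          rw [abs_of_nonneg]
          have := hDanti n (n + 2 * mm x) (Nat.le_add_right _ _)
          simp only [hD] at this ⊢
          linarith
  have hgsum : ∀ x ∈ S, Summable (fun n => g n x) := by
    intro x hx
    rw [← summable_nat_add_iff (mm x)]
    apply Summable.of_abs
    apply Summable.of_nonneg_of_le (fun n => abs_nonneg _) (hgbound x hx)
    exact (hDsum (2 * mm x)).mul_left _
  set G : ℝ → ℝ := fun x => ∑' n, g n x with hG
  set φ : ℝ → ℝ := fun x => y₀ + (x - x₀) * F x₀ - G x with hφ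
  have hGx₀ : G x₀ = 0 := by
    simp only [hG, hg, sub_self, zero_mul, sub_zero, tsum_zero]
  refine ⟨φ, ?_, ?_, ?_⟩
  · -- convexity
    refine ⟨hSconv, ?_⟩
    intro x hx y hy b c hb hc hbc
    simp only [smul_eq_mul]
    have hz : b * x + c * y ∈ S := by
      have := hSconv hx hy hb hc hbc
      simpa using this
    have hterm : ∀ n : ℕ, b * g n x + c * g n y ≤ g n (b * x + c * y) := by
      intro n
      have hn0 : (0:ℝ) ≤ (n:ℝ) := Nat.cast_nonneg n
      have hxn : x + (n:ℝ) ∈ S := hup hx (by linarith)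
      have hyn : y + (n:ℝ) ∈ S := hup hy (by linarith)
      have key := hF.2 hxn hyn hb hc hbc
      simp only [smul_eq_mul] at key
      have e : b * (x + (n:ℝ)) + c * (y + (n:ℝ)) = b * x + c * y + (n:ℝ) := by
        linear_combination (n:ℝ) * hbc
      rw [e] at key
      have expand : g n (b * x + c * y) - (b * g n x + c * g n y) =
          (F (b * x + c * y + (n:ℝ)) - (b * F (x + (n:ℝ)) + c * F (y + (n:ℝ))))
          + (b + c - 1) * (F (x₀ + (n:ℝ)) - x₀ * D n) := by
        simp only [hg]; ring
      rw [hbc] at expand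
      simp only [sub_self, zero_mul, add_zero] at expand
      linarith
    -- partial sums and limits
    have hlim1 : Tendsto (fun N => ∑ n ∈ Finset.range N, g n (b * x + c * y)) atTop
        (nhds (G (b * x + c * y))) := (hgsum _ hz).hasSum.tendsto_sum_nat
    have hlim2 : Tendsto (fun N => ∑ n ∈ Finset.range N, g n x) atTop (nhds (G x)) :=
      (hgsum _ hx).hasSum.tendsto_sum_nat
    have hlim3 : Tendsto (fun N => ∑ n ∈ Finset.range N, g n y) atTop (nhds (G y)) :=
      (hgsum _ hy).hasSum.tendsto_sum_nat
    have hL : Tendsto (fun N => y₀ + (b * x + c * y - x₀) * F x₀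
        - ∑ n ∈ Finset.range N, g n (b * x + c * y)) atTop (nhds (φ (b * x + c * y))) := by
      simpa only [hφ] using (tendsto_const_nhds (α := _) (x := y₀ + (b * x + c * y - x₀) * F x₀)).sub hlim1
    have hR : Tendsto (fun N => b * (y₀ + (x - x₀) * F x₀ - ∑ n ∈ Finset.range N, g n x)
        + c * (y₀ + (y - x₀) * F x₀ - ∑ n ∈ Finset.range N, g n y)) atTop
        (nhds (b * φ x + c * φ y)) := by
      exact (((tendsto_const_nhds.sub hlim2).const_mul b).add
        ((tendsto_const_nhds.sub hlim3).const_mul c))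
    refine le_of_tendsto_of_tendsto' hL hR ?_
    intro N
    have hsum_le : b * ∑ n ∈ Finset.range N, g n x + c * ∑ n ∈ Finset.range N, g n y ≤
        ∑ n ∈ Finset.range N, g n (b * x + c * y) := by
      rw [Finset.mul_sum, Finset.mul_sum, ← Finset.sum_add_distrib]
      exact Finset.sum_le_sum fun n _ => hterm n
    have haff : y₀ + (b * x + c * y - x₀) * F x₀ =
        b * (y₀ + (x - x₀) * F x₀) + c * (y₀ + (y - x₀) * F x₀) := by
      linear_combination (x₀ * F x₀ - y₀) * hbc
    have hexp : b * (y₀ + (x - x₀) * F x₀ - ∑ n ∈ Finset.range N, g n x)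
        + c * (y₀ + (y - x₀) * F x₀ - ∑ n ∈ Finset.range N, g n y)
        = (b * (y₀ + (x - x₀) * F x₀) + c * (y₀ + (y - x₀) * F x₀))
          - (b * ∑ n ∈ Finset.range N, g n x + c * ∑ n ∈ Finset.range N, g n y) := by
      ring
    linarith [hsum_le, haff, hexp]
  · -- functional equation
    intro x hx
    have hx1 : x + 1 ∈ S := hup hx (by linarith)
    have h1 := (hgsum x hx).hasSum
    have h2 := (hgsum (x + 1) hx1).hasSum
    have h3 := (h2.sub h1).tendsto_sum_nat
    have hcomp : ∀ N : ℕ, ∑ n ∈ Finset.range N, (g n (x + 1) - g n x) =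
        (F (x + N) - F (x₀ + N)) - F x + F x₀ := by
      intro N
      have e : ∀ n : ℕ, g n (x + 1) - g n x =
          (F (x + (n + 1 : ℕ)) - F (x + n)) - (F (x₀ + (n + 1 : ℕ)) - F (x₀ + n)) := by
        intro n
        simp only [hg, hD]
        push_cast
        rw [show x + 1 + (n:ℝ) = x + ((n:ℝ) + 1) from by ring,
          show x₀ + ((n:ℝ) + 1) = x₀ + (n:ℝ) + 1 from by ring]
        ring
      simp only [e]
      rw [Finset.sum_sub_distrib, Finset.sum_range_sub (fun n : ℕ => F (x + n)),
        Finset.sum_range_sub (fun n : ℕ => F (x₀ + n))]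
      simp only [Nat.cast_zero, add_zero]
      ring
    have hdiff0 : Tendsto (fun N : ℕ => F (x + N) - F (x₀ + N)) atTop (nhds 0) := by
      have hgz : Tendsto (fun N => g N x) atTop (nhds 0) := (hgsum x hx).tendsto_atTop_zero
      have hDz : Tendsto (fun N : ℕ => (x - x₀) * D N) atTop (nhds 0) := by
        simpa using hDtend.const_mul (x - x₀)
      have h' := hgz.add hDz
      rw [add_zero] at h'
      refine Tendsto.congr (fun N => ?_) h'
      simp only [hg]
      ring
    have hPS : Tendsto (fun N : ℕ => ∑ n ∈ Finset.range N, (g n (x + 1) - g n x)) atTop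
        (nhds (0 - F x + F x₀)) := by
      simp only [hcomp]
      exact (hdiff0.sub tendsto_const_nhds).add tendsto_const_nhds
    have hGeq : G (x + 1) - G x = 0 - F x + F x₀ := tendsto_nhds_unique h3 hPS
    simp only [hφ]
    linarith
  · simp only [hφ, hGx₀, sub_self, zero_mul]
    ring

private lemma krull_unique {a : EReal} {F : ℝ → ℝ}
    (hlim : Filter.Tendsto (fun x => F (x + 1) - F x) Filter.atTop (nhds 0))
    {x₀ : ℝ} (hx₀ : a < (x₀ : EReal)) {φ ψ : ℝ → ℝ}
    (hφ : ConvexOn ℝ {x : ℝ | a < (x : EReal)} φ ∨ ConcaveOn ℝ {x : ℝ | a < (x : EReal)} φ)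
    (hφfe : ∀ x : ℝ, a < (x : EReal) → φ (x + 1) = φ x + F x)
    (hψ : ConvexOn ℝ {x : ℝ | a < (x : EReal)} ψ ∨ ConcaveOn ℝ {x : ℝ | a < (x : EReal)} ψ)
    (hψfe : ∀ x : ℝ, a < (x : EReal) → ψ (x + 1) = ψ x + F x)
    (h0 : ψ x₀ = φ x₀) :
    ∀ x : ℝ, a < (x : EReal) → ψ x = φ x := by
  set S : Set ℝ := {x : ℝ | a < (x : EReal)} with hS
  have hup : ∀ ⦃y z : ℝ⦄, y ∈ S → y ≤ z → z ∈ S := fun y z hy hyz =>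
    lt_of_lt_of_le hy (EReal.coe_le_coe_iff.mpr hyz)
  intro x hx
  have hx₀S : x₀ ∈ S := hx₀
  have hxS : x ∈ S := hx
  -- iterated functional equation
  have hiter : ∀ (χ : ℝ → ℝ), (∀ y : ℝ, a < (y : EReal) → χ (y + 1) = χ y + F y) →
      ∀ (y : ℝ), y ∈ S → ∀ n : ℕ, χ (y + n) = χ y + ∑ k ∈ Finset.range n, F (y + k) := by
    intro χ hfe y hy n
    induction n with
    | zero => simp
    | succ n ih =>
      have hyn : y + (n:ℝ) ∈ S := hup hy (by linarith [Nat.cast_nonneg (α := ℝ) n])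
      have := hfe (y + (n:ℝ)) hyn
      have e : y + ((n+1 : ℕ):ℝ) = y + (n:ℝ) + 1 := by push_cast; ring
      rw [e, this, ih, Finset.sum_range_succ]
      ring
  set m : ℕ := ⌈|x - x₀|⌉₊ + 1 with hm
  have hm1 : (1:ℝ) ≤ (m : ℝ) := by
    simp only [hm]; push_cast; linarith [Nat.cast_nonneg (α := ℝ) ⌈|x - x₀|⌉₊]
  have htm : |x - x₀| ≤ (m : ℝ) := by
    simp only [hm]; push_cast; linarith [Nat.le_ceil |x - x₀|]
  -- the width sequence
  set w : ℕ → ℝ := fun n => |F (x₀ + ((n:ℝ) - (m:ℝ))) - F (x₀ + ((n:ℝ) + (m:ℝ)))| with hw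
  -- bracket bound for a solution χ
  have hkey : ∀ (χ : ℝ → ℝ),
      (ConvexOn ℝ S χ ∨ ConcaveOn ℝ S χ) → (∀ y : ℝ, a < (y : EReal) → χ (y + 1) = χ y + F y) →
      ∀ n : ℕ, m ≤ n →
      |χ (x + n) - χ (x₀ + n) - (x - x₀) * F (x₀ + n)| ≤ |x - x₀| * w n := by
    intro χ hχ hfe n hn
    have hnm : (m:ℝ) ≤ (n:ℝ) := Nat.cast_le.mpr hn
    have hb := bracket hup hχ hx₀S hxS hm1 htm hnm
    have e1 : χ (x₀ + (n:ℝ) + 1) - χ (x₀ + (n:ℝ)) = F (x₀ + (n:ℝ)) := by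
      have := hfe (x₀ + (n:ℝ)) (hup hx₀S (by linarith [Nat.cast_nonneg (α := ℝ) n]))
      linarith
    have e2 : χ (x₀ + ((n:ℝ) - (m:ℝ)) + 1) - χ (x₀ + ((n:ℝ) - (m:ℝ))) =
        F (x₀ + ((n:ℝ) - (m:ℝ))) := by
      have := hfe (x₀ + ((n:ℝ) - (m:ℝ))) (hup hx₀S (by linarith))
      linarith
    have e3 : χ (x₀ + ((n:ℝ) + (m:ℝ)) + 1) - χ (x₀ + ((n:ℝ) + (m:ℝ))) =
        F (x₀ + ((n:ℝ) + (m:ℝ))) := by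
      have := hfe (x₀ + ((n:ℝ) + (m:ℝ)))
        (hup hx₀S (by linarith [Nat.cast_nonneg (α := ℝ) n, Nat.cast_nonneg (α := ℝ) m]))
      linarith
    rw [e1, e2, e3] at hb
    exact hb
  -- the two solutions agree at x₀ + n and relate at x + n
  have hpsi : ∀ n : ℕ, ψ (x₀ + n) = φ (x₀ + n) := by
    intro n
    rw [hiter ψ hψfe x₀ hx₀S n, hiter φ hφfe x₀ hx₀S n, h0]
  have hdx : ∀ n : ℕ, ψ (x + n) - φ (x + n) = ψ x - φ x := by
    intro n
    rw [hiter ψ hψfe x hxS n, hiter φ hφfe x hxS n]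
    ring
  -- the estimate
  have hest : ∀ n : ℕ, m ≤ n → |ψ x - φ x| ≤ 2 * |x - x₀| * w n := by
    intro n hn
    have h1 := hkey φ hφ hφfe n hn
    have h2 := hkey ψ hψ hψfe n hn
    have e : ψ x - φ x =
        (ψ (x + n) - ψ (x₀ + n) - (x - x₀) * F (x₀ + n)) -
        (φ (x + n) - φ (x₀ + n) - (x - x₀) * F (x₀ + n)) := by
      have := hdx n
      have := hpsi n
      linarith
    rw [e]
    calc |(ψ (x + n) - ψ (x₀ + n) - (x - x₀) * F (x₀ + n)) -
        (φ (x + n) - φ (x₀ + n) - (x - x₀) * F (x₀ + n))| ≤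
        |ψ (x + n) - ψ (x₀ + n) - (x - x₀) * F (x₀ + n)| +
        |φ (x + n) - φ (x₀ + n) - (x - x₀) * F (x₀ + n)| := abs_sub _ _
      _ ≤ 2 * |x - x₀| * w n := by linarith
  -- w n → 0
  have hwto : Tendsto w atTop (nhds 0) := by
    have hsum : ∀ n : ℕ, F (x₀ + ((n:ℝ) + (m:ℝ))) - F (x₀ + ((n:ℝ) - (m:ℝ))) =
        ∑ j ∈ Finset.range (2 * m), (F (x₀ + (n:ℝ) - (m:ℝ) + (j:ℝ) + 1) -
          F (x₀ + (n:ℝ) - (m:ℝ) + (j:ℝ))) := by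
      intro n
      have e1 : ∑ j ∈ Finset.range (2 * m), (F (x₀ + (n:ℝ) - (m:ℝ) + (j:ℝ) + 1) -
          F (x₀ + (n:ℝ) - (m:ℝ) + (j:ℝ))) =
          ∑ j ∈ Finset.range (2 * m), (F (x₀ + (n:ℝ) - (m:ℝ) + ((j + 1 : ℕ):ℝ)) -
          F (x₀ + (n:ℝ) - (m:ℝ) + (j:ℝ))) :=
        Finset.sum_congr rfl fun j _ => by push_cast; ring_nf
      rw [e1, Finset.sum_range_sub (fun j : ℕ => F (x₀ + (n:ℝ) - (m:ℝ) + (j:ℝ)))]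
      push_cast
      ring_nf
    have hterm : ∀ j : ℕ, Tendsto (fun n : ℕ => F (x₀ + (n:ℝ) - (m:ℝ) + (j:ℝ) + 1) -
        F (x₀ + (n:ℝ) - (m:ℝ) + (j:ℝ))) atTop (nhds 0) := by
      intro j
      have hnat : Tendsto (fun n : ℕ => x₀ + (n:ℝ) - (m:ℝ) + (j:ℝ)) atTop atTop := by
        apply tendsto_atTop_add_const_right
        apply tendsto_atTop_add_const_right
        exact tendsto_atTop_add_const_left atTop x₀ tendsto_natCast_atTop_atTop
      exact hlim.comp hnat
    have hsum0 : Tendsto (fun n : ℕ => F (x₀ + ((n:ℝ) + (m:ℝ))) - F (x₀ + ((n:ℝ) - (m:ℝ))))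
        atTop (nhds 0) := by
      simp only [hsum]
      have := tendsto_finset_sum (Finset.range (2 * m))
        (fun j _ => hterm j)
      simpa using this
    have : Tendsto (fun n : ℕ => |F (x₀ + ((n:ℝ) + (m:ℝ))) - F (x₀ + ((n:ℝ) - (m:ℝ)))|)
        atTop (nhds 0) := by
      have := hsum0.abs
      simpa using this
    refine Tendsto.congr (fun n => ?_) this
    rw [hw]
    exact abs_sub_comm _ _
  have hfin : Tendsto (fun n : ℕ => 2 * |x - x₀| * w n) atTop (nhds 0) := by
    have := hwto.const_mul (2 * |x - x₀|)
    simpa using this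
  have : |ψ x - φ x| ≤ 0 := by
    refine ge_of_tendsto hfin ?_
    exact eventually_atTop.mpr ⟨m, fun n hn => hest n hn⟩
  have h00 : |ψ x - φ x| = 0 := le_antisymm this (abs_nonneg _)
  have := abs_eq_zero.mp h00
  linarith


theorem krull (a : EReal) (F : ℝ → ℝ)
    (hF : ConvexOn ℝ {x : ℝ | a < (x : EReal)} F ∨ ConcaveOn ℝ {x : ℝ | a < (x : EReal)} F)
    (hlim : Filter.Tendsto (fun x => F (x + 1) - F x) Filter.atTop (nhds 0))
    (x₀ : ℝ) (hx₀ : a < (x₀ : EReal)) (y₀ : ℝ) :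
    ∃ φ : ℝ → ℝ,
      ((ConvexOn ℝ {x : ℝ | a < (x : EReal)} φ ∨ ConcaveOn ℝ {x : ℝ | a < (x : EReal)} φ) ∧
        (∀ x : ℝ, a < (x : EReal) → φ (x + 1) = φ x + F x) ∧ φ x₀ = y₀) ∧
      ∀ ψ : ℝ → ℝ,
        ((ConvexOn ℝ {x : ℝ | a < (x : EReal)} ψ ∨ ConcaveOn ℝ {x : ℝ | a < (x : EReal)} ψ) ∧
          (∀ x : ℝ, a < (x : EReal) → ψ (x + 1) = ψ x + F x) ∧ ψ x₀ = y₀) →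
        ∀ x : ℝ, a < (x : EReal) → ψ x = φ x := by
  rcases hF with hFc | hFc
  · -- convex case : apply the concave construction to -F
    have hlim' : Filter.Tendsto (fun x => (-F) (x + 1) - (-F) x) Filter.atTop (nhds 0) := by
      have h := hlim.neg
      rw [neg_zero] at h
      exact Filter.Tendsto.congr (fun x => by simp only [Pi.neg_apply]; ring) h
    obtain ⟨φ', h1, h2, h3⟩ := krull_exists hFc.neg hlim' x₀ hx₀ (-y₀)
    have hfe : ∀ x : ℝ, a < (x : EReal) → (fun z => -φ' z) (x + 1) = (fun z => -φ' z) x + F x := by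
      intro x hx
      have h := h2 x hx
      simp only [Pi.neg_apply] at h
      show -φ' (x + 1) = -φ' x + F x
      linarith
    have hcc : ConcaveOn ℝ {x : ℝ | a < (x : EReal)} (fun z => -φ' z) := h1.neg
    refine ⟨fun z => -φ' z, ⟨Or.inr hcc, hfe, by show -φ' x₀ = y₀; rw [h3]; ring⟩, ?_⟩
    rintro ψ ⟨hψor, hψfe, hψ0⟩ x hx
    refine krull_unique hlim hx₀ (Or.inr hcc) hfe hψor hψfe ?_ x hx
    show ψ x₀ = -φ' x₀
    rw [hψ0, h3]
    ring
  · obtain ⟨φ, h1, h2, h3⟩ := krull_exists hFc hlim x₀ hx₀ y₀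
    refine ⟨φ, ⟨Or.inl h1, h2, h3⟩, ?_⟩
    rintro ψ ⟨hψor, hψfe, hψ0⟩ x hx
    refine krull_unique hlim hx₀ (Or.inl h1) h2 hψor hψfe ?_ x hx
    rw [hψ0, h3]
end

section
/- If F : (a,∞) → ℝ is convex or concave and lim_{x→∞}[F(x+1) − F(x)] = 0, then any two solutions φ₁, φ₂ : (a,∞) → ℝ of the equation φ(x+1) = φ(x) + F(x) that are both convex (or both concave) on some half-line (b,∞) and agree at one point x₀ > a must be equal on all of (a,∞). -/
open Set Filter Topology

/-!
The difference `g = φ₁ - φ₂` is 1-periodic on `(a, ∞)`. At a large point `z` both `φᵢ` have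
the same secant slopes, `F (z - 1)` on `[z - 1, z]` and `F z` on `[z, z + 1]`, so convexity (or
concavity) traps their increments over `[z, z + t]`, `0 ≤ t ≤ 1`, in a common interval of length
at most `|F z - F (z - 1)|`, which tends to `0`.
Hence the oscillation of `g` over a period is arbitrarily small, and by periodicity `g` is constant.
-/

theorem ConvexOn.sub_mem_Icc_mul {s : Set ℝ} {φ : ℝ → ℝ} (hφ : ConvexOn ℝ s φ) {x t : ℝ}
    (hl : x - 1 ∈ s) (hr : x + 1 ∈ s) (ht : t ∈ Icc (0 : ℝ) 1) :
    φ (x + t) - φ x ∈ Icc (t * (φ x - φ (x - 1))) (t * (φ (x + 1) - φ x)) := by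
  obtain ⟨ht0, ht1⟩ := ht
  rcases ht0.eq_or_lt with rfl | ht0
  · simp
  have hmem : ∀ y ∈ Icc (x - 1) (x + 1), y ∈ s := fun y hy => hφ.1.ordConnected.out hl hr hy
  have hx := hmem x ⟨by linarith, by linarith⟩
  have hxt := hmem (x + t) ⟨by linarith, by linarith⟩
  have hlow := hφ.secant_mono hx hl hxt (by linarith) (by linarith) (by linarith)
  have hupp := hφ.secant_mono hx hxt hr (by linarith) (by linarith) (by linarith)
  simp only [sub_sub_cancel_left, add_sub_cancel_left, div_neg, div_one] at hlow hupp
  rw [le_div_iff₀ ht0] at hlow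
  rw [div_le_iff₀ ht0] at hupp
  constructor <;> linarith

theorem ConcaveOn.sub_mem_Icc_mul {s : Set ℝ} {φ : ℝ → ℝ} (hφ : ConcaveOn ℝ s φ) {x t : ℝ}
    (hl : x - 1 ∈ s) (hr : x + 1 ∈ s) (ht : t ∈ Icc (0 : ℝ) 1) :
    φ (x + t) - φ x ∈ Icc (t * (φ (x + 1) - φ x)) (t * (φ x - φ (x - 1))) := by
  obtain ⟨hlow, hupp⟩ := hφ.neg.sub_mem_Icc_mul hl hr ht
  simp only [Pi.neg_apply] at hlow hupp
  constructor <;> linarith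

theorem abs_sub_sub_le_of_convexOn_or_concaveOn {s : Set ℝ} {φ₁ φ₂ : ℝ → ℝ}
    (h : (ConvexOn ℝ s φ₁ ∧ ConvexOn ℝ s φ₂) ∨ (ConcaveOn ℝ s φ₁ ∧ ConcaveOn ℝ s φ₂))
    {x t L R : ℝ} (hl : x - 1 ∈ s) (hr : x + 1 ∈ s) (ht : t ∈ Icc (0 : ℝ) 1)
    (hL₁ : φ₁ x - φ₁ (x - 1) = L) (hL₂ : φ₂ x - φ₂ (x - 1) = L)
    (hR₁ : φ₁ (x + 1) - φ₁ x = R) (hR₂ : φ₂ (x + 1) - φ₂ x = R) :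
    |(φ₁ (x + t) - φ₂ (x + t)) - (φ₁ x - φ₂ x)| ≤ |R - L| := by
  have hmem : φ₁ (x + t) - φ₁ x ∈ uIcc (t * L) (t * R) ∧
      φ₂ (x + t) - φ₂ x ∈ uIcc (t * L) (t * R) := by
    rcases h with ⟨h₁, h₂⟩ | ⟨h₁, h₂⟩
    · exact ⟨Icc_subset_uIcc (hL₁ ▸ hR₁ ▸ h₁.sub_mem_Icc_mul hl hr ht),
        Icc_subset_uIcc (hL₂ ▸ hR₂ ▸ h₂.sub_mem_Icc_mul hl hr ht)⟩
    · exact ⟨Icc_subset_uIcc' (hL₁ ▸ hR₁ ▸ h₁.sub_mem_Icc_mul hl hr ht),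
        Icc_subset_uIcc' (hL₂ ▸ hR₂ ▸ h₂.sub_mem_Icc_mul hl hr ht)⟩
  calc _ = |(φ₂ (x + t) - φ₂ x) - (φ₁ (x + t) - φ₁ x)| := by rw [← abs_neg]; ring_nf
    _ ≤ |t * R - t * L| := abs_sub_le_of_uIcc_subset_uIcc (uIcc_subset_uIcc hmem.1 hmem.2)
    _ = t * |R - L| := by rw [← mul_sub, abs_mul, abs_of_nonneg ht.1]
    _ ≤ |R - L| := mul_le_of_le_one_left (abs_nonneg _) ht.2

theorem sub_eq_and_sub_eq_of_add_one_eq {a : EReal} {F φ : ℝ → ℝ}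
    (hφ : ∀ x : ℝ, a < x → φ (x + 1) = φ x + F x) {z : ℝ} (hz : a < ((z - 1 : ℝ) : EReal)) :
    φ z - φ (z - 1) = F (z - 1) ∧ φ (z + 1) - φ z = F z := by
  refine ⟨by rw [← sub_add_cancel z 1, hφ _ hz]; simp, ?_⟩
  rw [hφ _ (hz.trans (by exact_mod_cast (by linarith)))]
  ring

theorem add_natCast_eq_of_add_one_eq {a : EReal} {g : ℝ → ℝ}
    (hg : ∀ x : ℝ, a < x → g (x + 1) = g x) {x : ℝ} (hx : a < x) (n : ℕ) : g (x + n) = g x := by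
  induction n with
  | zero => simp
  | succ n ih =>
    have hxn : a < ((x + n : ℝ) : EReal) :=
      hx.trans_le (by exact_mod_cast le_add_of_nonneg_right n.cast_nonneg)
    rw [Nat.cast_succ, ← add_assoc, hg _ hxn, ih]

theorem eq_of_add_natCast_eq_of_tendsto {g ε : ℝ → ℝ} (hε : Tendsto ε atTop (𝓝 0))
    (hosc : ∀ᶠ z in atTop, ∀ t ∈ Icc (0 : ℝ) 1, |g (z + t) - g z| ≤ ε z) {x y : ℝ}
    (hx : ∀ n : ℕ, g (x + n) = g x) (hy : ∀ n : ℕ, g (y + n) = g y) : g x = g y := by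
  wlog hxy : x ≤ y generalizing x y
  · exact (this hy hx (le_of_not_ge hxy)).symm
  set q := ⌊y - x⌋₊
  have ht : y - x - q ∈ Icc (0 : ℝ) 1 :=
    ⟨by linarith [Nat.floor_le (sub_nonneg.mpr hxy)], by linarith [Nat.lt_floor_add_one (y - x)]⟩
  have hshift : Tendsto (fun n : ℕ => x + ↑(n + q)) atTop atTop :=
    tendsto_atTop_add_const_left _ x
      (tendsto_natCast_atTop_atTop.comp (tendsto_add_atTop_nat q))
  have hbound : ∀ᶠ n : ℕ in atTop, |g y - g x| ≤ ε (x + ↑(n + q)) := by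
    filter_upwards [hshift.eventually hosc] with n hn
    have hyn : y + n = x + ↑(n + q) + (y - x - q) := by push_cast; ring
    simpa only [← hy n, hyn, hx] using hn _ ht
  have := abs_nonpos_iff.mp (ge_of_tendsto (hε.comp hshift) hbound)
  linarith

theorem krull_improved_uniqueness_general (a : EReal) (F : ℝ → ℝ)
    (hlim : Filter.Tendsto (fun x => F (x + 1) - F x) Filter.atTop (nhds 0))
    (φ₁ φ₂ : ℝ → ℝ)
    (heq₁ : ∀ x : ℝ, a < (x : EReal) → φ₁ (x + 1) = φ₁ x + F x)
    (heq₂ : ∀ x : ℝ, a < (x : EReal) → φ₂ (x + 1) = φ₂ x + F x)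
    (b : ℝ)
    (hconv : (ConvexOn ℝ (Set.Ioi b) φ₁ ∧ ConvexOn ℝ (Set.Ioi b) φ₂) ∨
             (ConcaveOn ℝ (Set.Ioi b) φ₁ ∧ ConcaveOn ℝ (Set.Ioi b) φ₂))
    (x₀ : ℝ) (hx₀ : a < (x₀ : EReal)) (hagree : φ₁ x₀ = φ₂ x₀) :
    ∀ x : ℝ, a < (x : EReal) → φ₁ x = φ₂ x := by
  intro y hy
  set g : ℝ → ℝ := fun x => φ₁ x - φ₂ x
  have hper : ∀ x : ℝ, a < x → g (x + 1) = g x := fun x hx => by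
    simp only [g, heq₁ x hx, heq₂ x hx]; ring
  have hε : Tendsto (fun z => |F z - F (z - 1)|) atTop (𝓝 0) := by
    simpa [← sub_eq_add_neg] using
      (hlim.comp (tendsto_atTop_add_const_right atTop (-1) tendsto_id)).abs
  have hosc : ∀ᶠ z in atTop, ∀ t ∈ Icc (0 : ℝ) 1, |g (z + t) - g z| ≤ |F z - F (z - 1)| := by
    filter_upwards [eventually_gt_atTop (max b x₀ + 1)] with z hz t ht
    have hz₁ : a < ((z - 1 : ℝ) : EReal) :=
      hx₀.trans (by exact_mod_cast (by linarith [le_max_right b x₀]))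
    have hmem : ∀ w, z - 1 ≤ w → w ∈ Ioi b := fun w hw => by
      simp only [mem_Ioi]; linarith [le_max_left b x₀]
    obtain ⟨hL₁, hR₁⟩ := sub_eq_and_sub_eq_of_add_one_eq heq₁ hz₁
    obtain ⟨hL₂, hR₂⟩ := sub_eq_and_sub_eq_of_add_one_eq heq₂ hz₁
    exact abs_sub_sub_le_of_convexOn_or_concaveOn hconv (hmem _ le_rfl) (hmem _ (by linarith)) ht
      hL₁ hL₂ hR₁ hR₂
  have := eq_of_add_natCast_eq_of_tendsto hε hosc
    (add_natCast_eq_of_add_one_eq hper hx₀) (add_natCast_eq_of_add_one_eq hper hy)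
  simp only [g, hagree, sub_self] at this
  linarith

theorem krull_improved_uniqueness (a : EReal) (F : ℝ → ℝ)
    (hF : ConvexOn ℝ {x : ℝ | a < (x : EReal)} F ∨ ConcaveOn ℝ {x : ℝ | a < (x : EReal)} F)
    (hlim : Filter.Tendsto (fun x => F (x + 1) - F x) Filter.atTop (nhds 0))
    (φ₁ φ₂ : ℝ → ℝ)
    (heq₁ : ∀ x : ℝ, a < (x : EReal) → φ₁ (x + 1) = φ₁ x + F x)
    (heq₂ : ∀ x : ℝ, a < (x : EReal) → φ₂ (x + 1) = φ₂ x + F x)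
    (b : ℝ) (hb : a ≤ (b : EReal))
    (hconv : (ConvexOn ℝ (Set.Ioi b) φ₁ ∧ ConvexOn ℝ (Set.Ioi b) φ₂) ∨
             (ConcaveOn ℝ (Set.Ioi b) φ₁ ∧ ConcaveOn ℝ (Set.Ioi b) φ₂))
    (x₀ : ℝ) (hx₀ : a < (x₀ : EReal)) (hagree : φ₁ x₀ = φ₂ x₀) :
    ∀ x : ℝ, a < (x : EReal) → φ₁ x = φ₂ x :=
  krull_improved_uniqueness_general a F hlim φ₁ φ₂ heq₁ heq₂ b hconv x₀ hx₀ hagree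
end

section
/- Let γ₁, γ₂ : (0,∞) → (0,∞) with B_{γ₁} = B_{γ₂}, and assume γ₂/γ₁ is Lebesgue measurable (or continuous at a point). Then there exists a unique c ∈ ℝ such that γ₂(x) = e^(cx) γ₁(x) for all x > 0. -/
/-!
Equal beta-type functions make `m = γ₂ / γ₁` multiplicative on `(0, ∞)`, so `log m` is additive
there. Shifting into `(0, ∞)` extends `log m` to a measurable additive map `ℝ → ℝ`; such a map is
continuous (Steinhaus), hence `ℝ`-linear, and `m x = exp (c x)`. The value at `1` pins down `c`.
-/

open MeasureTheory

theorem AddMonoidHom.apply_eq_mul_of_measurable (f : ℝ →+ ℝ) (hf : Measurable f) (x : ℝ) :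
    f x = x * f 1 := by
  simpa using map_real_smul f (Measure.AddMonoidHom.continuous_of_measurable f hf) x 1

noncomputable def extendPosAdditive (g : ℝ → ℝ) (x : ℝ) : ℝ :=
  g (x + (|x| + 1)) - g (|x| + 1)

theorem Measurable.extendPosAdditive {g : ℝ → ℝ} (hg : Measurable g) :
    Measurable (extendPosAdditive g) := by
  unfold _root_.extendPosAdditive
  fun_prop

section PosAdditive

variable {g : ℝ → ℝ} (hg : ∀ x y, 0 < x → 0 < y → g (x + y) = g x + g y)
include hg

theorem sub_shift_eq_of_add_pos {x a b : ℝ} (ha : 0 < a) (hb : 0 < b) (hxa : 0 < x + a)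
    (hxb : 0 < x + b) : g (x + a) - g a = g (x + b) - g b := by
  have h₁ := hg (x + a) b hxa hb
  have h₂ := hg (x + b) a hxb ha
  rw [add_right_comm] at h₁
  linarith

theorem extendPosAdditive_eq {x a : ℝ} (ha : 0 < a) (hxa : 0 < x + a) :
    extendPosAdditive g x = g (x + a) - g a :=
  sub_shift_eq_of_add_pos hg (by positivity) ha (by linarith [neg_abs_le x]) hxa

theorem extendPosAdditive_of_pos {x : ℝ} (hx : 0 < x) : extendPosAdditive g x = g x := by
  rw [extendPosAdditive_eq hg one_pos (by linarith), hg x 1 hx one_pos]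
  ring

theorem extendPosAdditive_add (x y : ℝ) :
    extendPosAdditive g (x + y) = extendPosAdditive g x + extendPosAdditive g y := by
  set a := |x| + |y| + 1
  have ha : 0 < a := by positivity
  have hxa : 0 < x + a := by linarith [neg_abs_le x, abs_nonneg y]
  have hya : 0 < y + a := by linarith [neg_abs_le y, abs_nonneg x]
  rw [extendPosAdditive_eq hg (add_pos ha ha) (by linarith), extendPosAdditive_eq hg ha hxa,
    extendPosAdditive_eq hg ha hya, add_add_add_comm, hg _ _ hxa hya, hg a a ha ha]
  ring

theorem exists_eq_mul_of_measurable_of_add_pos (hmeas : Measurable g) :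
    ∃ c, ∀ x, 0 < x → g x = c * x := by
  let G : ℝ →+ ℝ := AddMonoidHom.mk' (extendPosAdditive g) (extendPosAdditive_add hg)
  have hG : Measurable G := hmeas.extendPosAdditive
  refine ⟨G 1, fun x hx => ?_⟩
  rw [← extendPosAdditive_of_pos hg hx, mul_comm]
  exact G.apply_eq_mul_of_measurable hG x

end PosAdditive

theorem exists_eq_exp_of_measurable_of_mul_pos {m : ℝ → ℝ} (hmeas : Measurable m)
    (hpos : ∀ x, 0 < x → 0 < m x) (hm : ∀ x y, 0 < x → 0 < y → m (x + y) = m x * m y) :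
    ∃ c, ∀ x, 0 < x → m x = Real.exp (c * x) := by
  obtain ⟨c, hc⟩ : ∃ c, ∀ x, 0 < x → Real.log (m x) = c * x := by
    refine exists_eq_mul_of_measurable_of_add_pos (fun x y hx hy => ?_) hmeas.log
    rw [hm x y hx hy, Real.log_mul (hpos x hx).ne' (hpos y hy).ne']
  exact ⟨c, fun x hx => by rw [← hc x hx, Real.exp_log (hpos x hx)]⟩

theorem ratio_add_eq_mul_of_beta_eq {γ₁ γ₂ : ℝ → ℝ} {x y : ℝ} (hx : γ₁ x ≠ 0) (hy : γ₁ y ≠ 0)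
    (hxy₁ : γ₁ (x + y) ≠ 0) (hxy₂ : γ₂ (x + y) ≠ 0)
    (h : γ₁ x * γ₁ y / γ₁ (x + y) = γ₂ x * γ₂ y / γ₂ (x + y)) :
    γ₂ (x + y) / γ₁ (x + y) = γ₂ x / γ₁ x * (γ₂ y / γ₁ y) := by
  rw [div_eq_div_iff hxy₁ hxy₂] at h
  rw [div_mul_div_comm, div_eq_div_iff hxy₁ (mul_ne_zero hx hy)]
  linear_combination h

theorem beta_type_eq_exponential (γ₁ γ₂ : ℝ → ℝ)
    (h₁ : ∀ x : ℝ, 0 < x → 0 < γ₁ x) (h₂ : ∀ x : ℝ, 0 < x → 0 < γ₂ x)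
    (heq : ∀ x y : ℝ, 0 < x → 0 < y →
      γ₁ x * γ₁ y / γ₁ (x + y) = γ₂ x * γ₂ y / γ₂ (x + y))
    (hmeas : Measurable fun x => γ₂ x / γ₁ x) :
    ∃! c : ℝ, ∀ x : ℝ, 0 < x → γ₂ x = Real.exp (c * x) * γ₁ x := by
  have hmul : ∀ x y, 0 < x → 0 < y →
      γ₂ (x + y) / γ₁ (x + y) = γ₂ x / γ₁ x * (γ₂ y / γ₁ y) := fun x y hx hy =>
    have hxy : 0 < x + y := add_pos hx hy
    ratio_add_eq_mul_of_beta_eq (h₁ x hx).ne' (h₁ y hy).ne' (h₁ _ hxy).ne' (h₂ _ hxy).ne'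
      (heq x y hx hy)
  obtain ⟨c, hc⟩ := exists_eq_exp_of_measurable_of_mul_pos hmeas
    (fun x hx => div_pos (h₂ x hx) (h₁ x hx)) hmul
  refine ⟨c, fun x hx => (div_eq_iff (h₁ x hx).ne').mp (hc x hx), fun c' hc' => ?_⟩
  have h : Real.exp (c' * 1) = Real.exp (c * 1) :=
    mul_right_cancel₀ (h₁ 1 one_pos).ne' <|
      (hc' 1 one_pos).symm.trans ((div_eq_iff (h₁ 1 one_pos).ne').mp (hc 1 one_pos))
  simpa using h
end
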